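/- arXiv:2601.11370 — 2 statements merged into one kernel-verified Lean document; each statement's English description precedes it below -/
import Mathlib

section
/- Let A be a subset of ℝⁿ and B a subset of ℝᵐ, and suppose h : A → B is a homeomorphism. Let Å denote the interior of A in its closure (and similarly B̊). If the closure of A is compact, then h maps Å into B̊; that is, no point of Å can be sent to a point of B not in the interior of B relative to its closure. -/
/-!
A point `x ∈ A` lies in the interior of `A` relative to `closure A` exactly when `A` is locally
compact at `x`: a compact neighbourhood of `x` in the ambient space that misses
`closure A \ A` meets `closure A` inside `A`; conversely, a compact, hence closed, set `K ⊆ A`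
which is a neighbourhood of `x` in `A` swallows the whole of `closure A` near `x`.
Local compactness at a point is a topological property of `A`, so `h` preserves it.
-/

open Topology

theorem exists_isCompact_mem_nhds_of_notMem_closure_closure_diff {X : Type*}
    [TopologicalSpace X] [LocallyCompactSpace X] {s : Set X} {x : s}
    (hx : (x : X) ∉ closure (closure s \ s)) : ∃ K ∈ 𝓝 x, IsCompact K := by
  obtain ⟨K, hK, hKU, hKc⟩ :=
    local_compact_nhds (isClosed_closure.isOpen_compl.mem_nhds hx)
  have hKs : K ∩ closure s ⊆ s := fun y hy ↦ by
    by_contra hys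
    exact hKU hy.1 (subset_closure ⟨hy.2, hys⟩)
  refine ⟨Subtype.val ⁻¹' K, continuousAt_subtype_val.preimage_mem_nhds hK, ?_⟩
  have himage : Subtype.val '' (Subtype.val ⁻¹' K : Set s) = K ∩ closure s := by
    rw [Subtype.image_preimage_coe]
    exact Set.Subset.antisymm (fun y hy ↦ ⟨hy.2, subset_closure hy.1⟩) fun y hy ↦ ⟨hKs hy, hy.1⟩
  rw [Subtype.isCompact_iff, himage]
  exact hKc.inter_right isClosed_closure

theorem notMem_closure_closure_diff_of_isCompact_mem_nhds {Y : Type*} [TopologicalSpace Y]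
    [T2Space Y] {t : Set Y} {y : t} {K : Set t} (hK : K ∈ 𝓝 y) (hKc : IsCompact K) :
    (y : Y) ∉ closure (closure t \ t) := by
  obtain ⟨W, hW, hWK⟩ := (mem_nhds_subtype t y K).mp hK
  have hWt : interior W ∩ t ⊆ Subtype.val '' K := fun z hz ↦
    ⟨⟨z, hz.2⟩, hWK (show z ∈ W from interior_subset hz.1), rfl⟩
  have hWclosure : interior W ∩ closure t ⊆ t := fun z hz ↦ by
    have hzK : z ∈ closure (Subtype.val '' K) :=
      closure_mono hWt (isOpen_interior.inter_closure hz)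
    obtain ⟨k, -, rfl⟩ := (hKc.image continuous_subtype_val).isClosed.closure_eq ▸ hzK
    exact k.2
  intro hy
  obtain ⟨z, hzW, hzt, hznt⟩ :=
    mem_closure_iff.mp hy _ isOpen_interior (mem_interior_iff_mem_nhds.mpr hW)
  exact hznt (hWclosure ⟨hzW, hzt⟩)

theorem stmt_0_general {n m : ℕ} (A : Set (EuclideanSpace ℝ (Fin n)))
    (B : Set (EuclideanSpace ℝ (Fin m)))
    (h : A ≃ₜ B) :
    ∀ x : A, (x : EuclideanSpace ℝ (Fin n)) ∈ closure A \ closure (closure A \ A) →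
      (h x : EuclideanSpace ℝ (Fin m)) ∈ closure B \ closure (closure B \ B) := by
  intro x hx
  obtain ⟨K, hK, hKc⟩ := exists_isCompact_mem_nhds_of_notMem_closure_closure_diff hx.2
  exact ⟨subset_closure (h x).2, notMem_closure_closure_diff_of_isCompact_mem_nhds
    (h.isOpenMap.image_mem_nhds hK) (h.isCompact_image.mpr hKc)⟩

/-- If `h : A ≃ₜ B` is a homeomorphism between subsets of Euclidean
spaces and `closure A` is compact, then `h` maps the interior of `A` in `closure A`
into the interior of `B` in `closure B`.  Here the interior of `A` in `closure A`
is expressed as `closure A \ closure (closure A \ A)`. -/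
theorem stmt_0 {n m : ℕ} (A : Set (EuclideanSpace ℝ (Fin n)))
    (B : Set (EuclideanSpace ℝ (Fin m)))
    (h : A ≃ₜ B)
    (hA : IsCompact (closure A)) :
    ∀ x : A, (x : EuclideanSpace ℝ (Fin n)) ∈ closure A \ closure (closure A \ A) →
      (h x : EuclideanSpace ℝ (Fin m)) ∈ closure B \ closure (closure B \ B) :=
  stmt_0_general A B h
end

section
/- Let A be a subset of ℝⁿ and B a subset of ℝᵐ with closure(A) compact, and let h : A → B be a homeomorphism. Then h maps the boundary part A \ Å homeomorphically onto B \ B̊, where Å and B̊ are the interiors of A and B in their respective closures. -/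
/-!
Write `∂A := closure A \ A` for the points that `A` misses in its closure. The set
`A \ Å` is `A ∩ closure ∂A`, and a point of `A` lies in `closure ∂A` exactly when it has no
compact neighbourhood in the subspace `A`: a compact neighbourhood is closed in the ambient
space, so it keeps a whole ambient neighbourhood of the point away from `∂A`; conversely a small
compact ambient neighbourhood avoiding `∂A` meets `closure A` only inside `A`, so its trace
on `A` is compact. Having a compact neighbourhood is intrinsic to the space `A`, hence preserved by `h`.
-/

open Topology Set

variable {X Y : Type*} [TopologicalSpace X] [TopologicalSpace Y]

theorem Set.diff_diff_closure_eq_inter (A C : Set X) : A \ (closure A \ C) = A ∩ C := by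
  rw [sdiff_sdiff_right, sdiff_eq_empty.mpr subset_closure, empty_union]

theorem Homeomorph.exists_compact_mem_nhds_apply_iff (h : X ≃ₜ Y) (x : X) :
    (∃ K ∈ 𝓝 (h x), IsCompact K) ↔ ∃ K ∈ 𝓝 x, IsCompact K := by
  constructor
  · rintro ⟨K, hKx, hK⟩
    exact ⟨h ⁻¹' K, h.continuous.continuousAt.preimage_mem_nhds hKx, h.isCompact_preimage.mpr hK⟩
  · rintro ⟨K, hKx, hK⟩
    exact ⟨h '' K, h.isOpenMap.image_mem_nhds hKx, hK.image h.continuous⟩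

theorem exists_compact_mem_nhds_subtype_iff [T2Space X] [LocallyCompactSpace X] {A : Set X}
    (x : A) : (∃ K ∈ 𝓝 x, IsCompact K) ↔ (x : X) ∉ closure (closure A \ A) := by
  constructor
  · rintro ⟨K, hKx, hK⟩ hx
    have hKA : Subtype.val '' K ∈ 𝓝[A] (x : X) := by
      rw [← map_nhds_subtype_val]
      exact Filter.image_mem_map hKx
    obtain ⟨U, hU, hxU, hUA⟩ := mem_nhdsWithin.mp hKA
    have hUclosure : U ∩ closure A ⊆ A :=
      calc U ∩ closure A ⊆ closure (U ∩ A) := hU.inter_closure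
        _ ⊆ Subtype.val '' K :=
          (Subtype.isCompact_iff.mp hK).isClosed.closure_subset_iff.mpr hUA
        _ ⊆ A := Subtype.coe_image_subset A K
    obtain ⟨y, hyU, hyA, hyA'⟩ := mem_closure_iff.mp hx U hU hxU
    exact hyA' (hUclosure ⟨hyU, hyA⟩)
  · intro hx
    obtain ⟨K, hKx, hKU, hK⟩ :=
      local_compact_nhds (isClosed_closure.isOpen_compl.mem_nhds hx)
    have hKA : closure A ∩ K ⊆ A := fun y ⟨hyA, hyK⟩ ↦
      by_contra fun hyA' ↦ hKU hyK (subset_closure ⟨hyA, hyA'⟩)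
    refine ⟨Subtype.val ⁻¹' K, continuous_subtype_val.continuousAt.preimage_mem_nhds hKx, ?_⟩
    have hAK : A ∩ K = closure A ∩ K :=
      (inter_subset_inter_left K subset_closure).antisymm (subset_inter hKA inter_subset_right)
    rw [Subtype.isCompact_iff, Subtype.image_preimage_coe, hAK]
    exact hK.inter_left isClosed_closure

theorem Homeomorph.mem_diff_diff_closure_iff [T2Space X] [LocallyCompactSpace X] [T2Space Y]
    [LocallyCompactSpace Y] {A : Set X} {B : Set Y} (h : A ≃ₜ B) (x : A) :
    (x : X) ∈ A \ (closure A \ closure (closure A \ A)) ↔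
      (h x : Y) ∈ B \ (closure B \ closure (closure B \ B)) := by
  simp only [diff_diff_closure_eq_inter, mem_inter_iff, Subtype.coe_prop, true_and]
  rw [← not_iff_not, ← exists_compact_mem_nhds_subtype_iff, ← exists_compact_mem_nhds_subtype_iff,
    h.exists_compact_mem_nhds_apply_iff]

noncomputable def Homeomorph.restrictSubsets {A : Set X} {B : Set Y} (h : A ≃ₜ B) {S : Set X}
    {T : Set Y} (hS : S ⊆ A) (hT : T ⊆ B) (hST : ∀ x : A, (x : X) ∈ S ↔ (h x : Y) ∈ T) :
    S ≃ₜ T :=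
  (IsEmbedding.subtypeVal.homeomorphOfSubsetRange (Subtype.range_coe ▸ hS)).symm.trans
    ((h.sets (Set.ext hST)).trans
      (IsEmbedding.subtypeVal.homeomorphOfSubsetRange (Subtype.range_coe ▸ hT)))

theorem stmt_1_general {n m : ℕ} (A : Set (EuclideanSpace ℝ (Fin n)))
    (B : Set (EuclideanSpace ℝ (Fin m)))
    (h : A ≃ₜ B) :
    (∀ x : A, (x : EuclideanSpace ℝ (Fin n)) ∈
        A \ (closure A \ closure (closure A \ A)) ↔
      (h x : EuclideanSpace ℝ (Fin m)) ∈
        B \ (closure B \ closure (closure B \ B))) ∧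
    Nonempty (((A \ (closure A \ closure (closure A \ A))) :
        Set (EuclideanSpace ℝ (Fin n))) ≃ₜ
      ((B \ (closure B \ closure (closure B \ B))) :
        Set (EuclideanSpace ℝ (Fin m)))) :=
  ⟨h.mem_diff_diff_closure_iff,
    ⟨h.restrictSubsets sdiff_subset sdiff_subset h.mem_diff_diff_closure_iff⟩⟩

/-- a homeomorphism `h : A ≃ₜ B` between subsets of Euclidean spaces
(with compact closures) maps `A \ Å` homeomorphically onto `B \ B̊`, where
`Å = closure A \ closure (closure A \ A)` is the interior of `A` in `closure A`,
and similarly for `B̊`. -/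
theorem stmt_1 {n m : ℕ} (A : Set (EuclideanSpace ℝ (Fin n)))
    (B : Set (EuclideanSpace ℝ (Fin m)))
    (h : A ≃ₜ B)
    (hA : IsCompact (closure A)) (hB : IsCompact (closure B)) :
    (∀ x : A, (x : EuclideanSpace ℝ (Fin n)) ∈
        A \ (closure A \ closure (closure A \ A)) ↔
      (h x : EuclideanSpace ℝ (Fin m)) ∈
        B \ (closure B \ closure (closure B \ B))) ∧
    Nonempty (((A \ (closure A \ closure (closure A \ A))) :
        Set (EuclideanSpace ℝ (Fin n))) ≃ₜ
      ((B \ (closure B \ closure (closure B \ B))) :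
        Set (EuclideanSpace ℝ (Fin m)))) :=
  stmt_1_general A B h
end
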